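/- If G is a finite simple graph with at least one edge and χ(G) = Δ(G) + 1, then vs_χ(G) equals the number of connected components C of G with χ(C) = Δ(G) + 1. -/

import Mathlib

/-!
Deleting a vertex lowers the chromatic number by at most one, and a graph is `k`-colorable iff
all its components are, so a deletion set must meet every component `C` with `χ(C) = Δ + 1`.
Conversely one vertex `x` from each such component suffices: the rest of the component of `x` is
`Δ`-colorable greedily, in order of decreasing distance to `x`, because each vertex has a
neighbour nearer to `x` that is coloured after it, hence fewer than `Δ` coloured neighbours.
-/

open SimpleGraph

/-- The chromatic number of a graph, as a natural number (for finite graphs this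
is the usual chromatic number). -/
noncomputable def chromNum {V : Type*} (G : SimpleGraph V) : ℕ :=
  sInf {n : ℕ | G.Colorable n}

/-- The maximum degree Δ(G) of a finite graph. -/
noncomputable def maxDeg {V : Type*} [Fintype V] (G : SimpleGraph V) : ℕ :=
  Finset.univ.sup fun v => Nat.card (G.neighborSet v)

/-- The chromatic vertex stability number: the minimum number of vertices whose
deletion results in a graph with chromatic number χ(G) − 1. -/
noncomputable def vsChi {V : Type*} [Fintype V] (G : SimpleGraph V) : ℕ :=
  sInf {k : ℕ | ∃ S : Finset V, S.card = k ∧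
    chromNum (G.induce ((S : Set V))ᶜ) = chromNum G - 1}

/-- The independent chromatic vertex stability number: the minimum size of an
independent set of vertices whose deletion results in a graph with chromatic
number χ(G) − 1. -/
noncomputable def ivsChi {V : Type*} [Fintype V] (G : SimpleGraph V) : ℕ :=
  sInf {k : ℕ | ∃ S : Finset V, S.card = k ∧
    (∀ u ∈ S, ∀ v ∈ S, ¬ G.Adj u v) ∧
    chromNum (G.induce ((S : Set V))ᶜ) = chromNum G - 1}

/-- The chromatic edge stability number: the minimum number of edges whose
deletion results in a graph with chromatic number χ(G) − 1. -/
noncomputable def esChi {V : Type*} (G : SimpleGraph V) : ℕ :=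
  sInf {k : ℕ | ∃ F : Finset (Sym2 V), ↑F ⊆ G.edgeSet ∧ F.card = k ∧
    chromNum (G.deleteEdges ↑F) = chromNum G - 1}

open SimpleGraph

namespace SimpleGraph

variable {V : Type*} {G : SimpleGraph V} {s : Set V} {k : ℕ}

theorem induce_colorable_iff :
    (G.induce s).Colorable k ↔
      ∃ f : V → ℕ, (∀ v ∈ s, f v < k) ∧ ∀ u ∈ s, ∀ v ∈ s, G.Adj u v → f u ≠ f v := by
  classical
  rw [colorable_iff_exists_bdd_nat_coloring]
  constructor
  · rintro ⟨C, hC⟩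
    refine ⟨fun v => if hv : v ∈ s then C ⟨v, hv⟩ else 0, fun v hv => ?_,
      fun u hu v hv huv => ?_⟩
    · simpa [hv] using hC ⟨v, hv⟩
    · simpa [hu, hv] using C.valid (show (G.induce s).Adj ⟨u, hu⟩ ⟨v, hv⟩ from huv)
  · rintro ⟨f, hf, hproper⟩
    exact ⟨Coloring.mk (fun v => f v) fun {u v} huv => hproper u u.2 v v.2 huv,
      fun v => hf v v.2⟩

theorem induce_colorable_of_forall_connectedComponent
    (h : ∀ c : G.ConnectedComponent, (G.induce (s ∩ c.supp)).Colorable k) :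
    (G.induce s).Colorable k := by
  simp only [induce_colorable_iff] at h ⊢
  choose f hf hproper using h
  refine ⟨fun v => f (G.connectedComponentMk v) v, fun v hv => hf _ v ⟨hv, rfl⟩,
    fun u hu v hv huv => ?_⟩
  have hvu : G.connectedComponentMk v = G.connectedComponentMk u :=
    (ConnectedComponent.connectedComponentMk_eq_of_adj huv).symm
  simp only [hvu]
  exact hproper _ u ⟨hu, rfl⟩ v ⟨hv, hvu⟩ huv

theorem update_ne_update_of_adj [DecidableEq V] {f : V → ℕ} {a : V} {c : ℕ}
    (hf : ∀ u ∈ s, ∀ v ∈ s, G.Adj u v → f u ≠ f v) (ha : a ∉ s)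
    (hc : c ∉ f '' (G.neighborSet a ∩ s)) :
    ∀ u ∈ insert a s, ∀ v ∈ insert a s, G.Adj u v →
      Function.update f a c u ≠ Function.update f a c v := by
  have hne : ∀ v ∈ s, v ≠ a := fun v hv hva => ha (hva ▸ hv)
  rintro u (rfl | hu) v (rfl | hv) huv
  · exact absurd huv (G.loopless.irrefl _)
  · rw [Function.update_self, Function.update_of_ne (hne v hv)]
    exact fun h => hc ⟨v, ⟨huv, hv⟩, h.symm⟩
  · rw [Function.update_self, Function.update_of_ne (hne u hu)]
    exact fun h => hc ⟨u, ⟨huv.symm, hu⟩, h⟩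
  · rw [Function.update_of_ne (hne u hu), Function.update_of_ne (hne v hv)]
    exact hf u hu v hv huv

theorem induce_insert_colorable [G.LocallyFinite] {a : V} (h : (G.induce s).Colorable k)
    (ha : (G.neighborSet a ∩ s).ncard < k) : (G.induce (insert a s)).Colorable k := by
  classical
  by_cases has : a ∈ s
  · rwa [Set.insert_eq_of_mem has]
  obtain ⟨f, hf, hproper⟩ := induce_colorable_iff.1 h
  have hused : (f '' (G.neighborSet a ∩ s)).ncard < (Set.Iio k).ncard :=
    (Set.ncard_image_le (Set.toFinite _)).trans_lt (by rwa [Set.ncard_Iio_nat])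
  obtain ⟨c, hck, hc⟩ := Set.exists_mem_notMem_of_ncard_lt_ncard hused (Set.toFinite _)
  refine induce_colorable_iff.2
    ⟨Function.update f a c, ?_, update_ne_update_of_adj hproper has hc⟩
  rintro v (rfl | hv)
  · simpa using hck
  · rw [Function.update_of_ne (ne_of_mem_of_not_mem hv has)]
    exact hf v hv

theorem induce_colorable_add_one_of_diff_singleton {x : V}
    (h : (G.induce (s \ {x})).Colorable k) : (G.induce s).Colorable (k + 1) := by
  classical
  obtain ⟨f, hf, hproper⟩ := induce_colorable_iff.1 h
  have hk : k ∉ f '' (G.neighborSet x ∩ (s \ {x})) := by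
    rintro ⟨v, ⟨-, hv⟩, hvk⟩
    exact (hf v hv).ne hvk
  have hsub := Set.subset_insert_sdiff_singleton x s
  refine induce_colorable_iff.2 ⟨Function.update f x k, fun v hv => ?_, fun u hu v hv =>
    update_ne_update_of_adj hproper (fun hx => hx.2 rfl) hk u (hsub hu) v (hsub hv)⟩
  rcases eq_or_ne v x with rfl | hvx
  · simp
  · rw [Function.update_of_ne hvx]
    exact (hf v ⟨hv, hvx⟩).trans (Nat.lt_succ_self k)

theorem induce_colorable_of_forall_exists_adj_lt [G.LocallyFinite]
    (hdeg : ∀ v, (G.neighborSet v).ncard ≤ k) (d : V → ℕ) (s : Finset V)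
    (h : ∀ v ∈ s, ∃ w, G.Adj v w ∧ d w < d v) : (G.induce s).Colorable k := by
  classical
  induction s using Finset.induction_on_min_value d with
  | empty => simpa using Colorable.of_isEmpty k
  | insert a s has hmin ih =>
    rw [Finset.coe_insert]
    refine induce_insert_colorable (ih fun v hv => h v (Finset.mem_insert_of_mem hv)) ?_
    obtain ⟨w, haw, hw⟩ := h a (Finset.mem_insert_self a s)
    have hws : w ∉ (s : Set V) := fun hws => (hmin w hws).not_gt hw
    calc (G.neighborSet a ∩ s).ncard
        < (G.neighborSet a).ncard :=
          Set.ncard_lt_ncard (Set.inter_ssubset_left_iff.2 fun hsub => hws (hsub haw))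
      _ ≤ k := hdeg a

theorem Reachable.exists_adj_dist_lt {v x : V} (h : G.Reachable v x) (hvx : v ≠ x) :
    ∃ w, G.Adj v w ∧ G.dist w x < G.dist v x := by
  obtain ⟨p, hp⟩ := h.exists_walk_length_eq_dist
  cases p with
  | nil => exact absurd rfl hvx
  | cons hadj q =>
    refine ⟨_, hadj, (dist_le q).trans_lt ?_⟩
    rw [← hp, Walk.length_cons]
    omega

theorem induce_supp_diff_singleton_colorable [Finite V]
    (hdeg : ∀ v, (G.neighborSet v).ncard ≤ k) (x : V) :
    (G.induce ((G.connectedComponentMk x).supp \ {x})).Colorable k := by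
  have := Fintype.ofFinite V
  classical
  have hfin := Set.toFinite ((G.connectedComponentMk x).supp \ {x})
  rw [← hfin.coe_toFinset]
  refine induce_colorable_of_forall_exists_adj_lt hdeg (G.dist · x) _ fun v hv => ?_
  obtain ⟨hvx, hne⟩ := hfin.mem_toFinset.1 hv
  exact (ConnectedComponent.exact hvx).exists_adj_dist_lt hne

theorem induce_compl_colorable_of_meets [Finite V] {S : Set V}
    (hdeg : ∀ v, (G.neighborSet v).ncard ≤ k)
    (hS : ∀ c : G.ConnectedComponent, ¬ (G.induce c.supp).Colorable k →
      (S ∩ c.supp).Nonempty) :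
    (G.induce Sᶜ).Colorable k := by
  refine induce_colorable_of_forall_connectedComponent fun c => ?_
  by_cases hc : (G.induce c.supp).Colorable k
  · exact hc.of_hom (G.induceHomOfLE Set.inter_subset_right).toHom
  obtain ⟨x, hxS, rfl⟩ := hS c hc
  refine (induce_supp_diff_singleton_colorable hdeg x).of_hom (G.induceHomOfLE ?_).toHom
  rintro v ⟨hvS, hv⟩
  exact ⟨hv, fun hvx => hvS (Set.mem_singleton_iff.1 hvx ▸ hxS)⟩

theorem card_not_colorable_connectedComponent_le (S : Finset V)
    (h : (G.induce (↑S)ᶜ).Colorable k) :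
    Nat.card {c : G.ConnectedComponent // ¬ (G.induce c.supp).Colorable k} ≤ S.card := by
  have hmeet : ∀ c : {c : G.ConnectedComponent // ¬ (G.induce c.supp).Colorable k},
      ∃ v ∈ S, v ∈ c.1.supp := by
    rintro ⟨c, hc⟩
    by_contra! hdisj
    exact hc (h.of_hom (G.induceHomOfLE fun v hv hvS => hdisj v hvS hv).toHom)
  choose φ hφS hφc using hmeet
  rw [← Nat.card_eq_finsetCard]
  refine Nat.card_le_card_of_injective (fun c => ⟨φ c, hφS c⟩) fun c c' hcc' => ?_
  have : G.connectedComponentMk (φ c) = G.connectedComponentMk (φ c') :=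
    congrArg (G.connectedComponentMk ∘ Subtype.val) hcc'
  exact Subtype.ext ((hφc c).symm.trans (this.trans (hφc c')))

theorem exists_finset_inter_supp_eq_singleton [Finite V] (P : G.ConnectedComponent → Prop) :
    ∃ S : Finset V, S.card = Nat.card {c // P c} ∧
      ∀ c, P c → ∃ x, (S : Set V) ∩ c.supp = {x} := by
  classical
  have := Fintype.ofFinite V
  choose rep hrep using fun c : G.ConnectedComponent => c.exists_rep
  have hinj : Function.Injective rep := fun c c' h => (hrep c).symm.trans (h ▸ hrep c')
  refine ⟨(Finset.univ.filter P).image rep, ?_, fun c hc => ⟨rep c, ?_⟩⟩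
  · rw [Finset.card_image_of_injective _ hinj, Nat.card_eq_fintype_card, Fintype.card_subtype]
  · ext v
    simp only [Finset.coe_image, Finset.coe_filter, Finset.mem_univ, true_and, Set.mem_inter_iff,
      Set.mem_image, ConnectedComponent.mem_supp_iff, Set.mem_singleton_iff]
    constructor
    · rintro ⟨⟨c', -, rfl⟩, hc'⟩
      exact congrArg rep ((hrep c').symm.trans hc')
    · rintro rfl
      exact ⟨⟨c, hc, rfl⟩, hrep c⟩

end SimpleGraph

section ChromNum

variable {V W : Type*} {G : SimpleGraph V} {n : ℕ}

theorem chromNum_le_of_colorable (h : G.Colorable n) : chromNum G ≤ n :=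
  Nat.sInf_le h

theorem colorable_chromNum [Finite V] (G : SimpleGraph V) : G.Colorable (chromNum G) :=
  have := Fintype.ofFinite V
  Nat.sInf_mem (s := {n | G.Colorable n}) ⟨_, G.colorable_of_fintype⟩

theorem chromNum_le_iff [Finite V] : chromNum G ≤ n ↔ G.Colorable n :=
  ⟨fun h => (colorable_chromNum G).mono h, chromNum_le_of_colorable⟩

theorem chromNum_le_of_hom [Finite W] {G' : SimpleGraph W} (f : G →g G') :
    chromNum G ≤ chromNum G' :=
  chromNum_le_of_colorable ((colorable_chromNum G').of_hom f)

theorem chromNum_induce_supp_le [Finite V] {S : Set V} {c : G.ConnectedComponent} {x : V}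
    (hx : S ∩ c.supp = {x}) : chromNum (G.induce c.supp) ≤ chromNum (G.induce Sᶜ) + 1 := by
  have hsub : c.supp \ {x} ⊆ Sᶜ := fun v ⟨hv, hvx⟩ hvS => hvx (hx ▸ ⟨hvS, hv⟩)
  exact chromNum_le_of_colorable (induce_colorable_add_one_of_diff_singleton
    ((colorable_chromNum _).of_hom (G.induceHomOfLE hsub).toHom))

theorem chromNum_induce_supp_eq_iff [Finite V] (h : chromNum G = n + 1)
    (c : G.ConnectedComponent) :
    chromNum (G.induce c.supp) = n + 1 ↔ ¬ (G.induce c.supp).Colorable n := by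
  have := chromNum_le_of_hom (Embedding.induce (G := G) c.supp).toHom
  rw [← chromNum_le_iff]
  omega

end ChromNum

theorem stmt_2_general {V : Type*} [Fintype V] (G : SimpleGraph V)
    (hchi : chromNum G = maxDeg G + 1) :
    vsChi G =
      Nat.card {c : G.ConnectedComponent //
        chromNum (G.induce c.supp) = maxDeg G + 1} := by
  set Δ := maxDeg G
  have hdeg : ∀ v, (G.neighborSet v).ncard ≤ Δ := fun v =>
    Finset.le_sup (f := fun v => Nat.card (G.neighborSet v)) (Finset.mem_univ v)
  rw [Nat.card_congr (Equiv.subtypeEquivRight (chromNum_induce_supp_eq_iff hchi))]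
  obtain ⟨c₀, hc₀⟩ : ∃ c : G.ConnectedComponent, ¬ (G.induce c.supp).Colorable Δ := by
    by_contra! h
    have := chromNum_le_of_colorable (colorable_iff_forall_connectedComponent.2 h)
    omega
  obtain ⟨S, hScard, hS⟩ := exists_finset_inter_supp_eq_singleton
    fun c : G.ConnectedComponent => ¬ (G.induce c.supp).Colorable Δ
  have hSchrom : chromNum (G.induce (↑S)ᶜ) = Δ := by
    have hupper := chromNum_le_of_colorable <| induce_compl_colorable_of_meets hdeg fun c hc =>
      (hS c hc).elim fun x hx => hx ▸ Set.singleton_nonempty x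
    obtain ⟨x, hx⟩ := hS c₀ hc₀
    have hlower := chromNum_induce_supp_le hx
    rw [(chromNum_induce_supp_eq_iff hchi c₀).2 hc₀] at hlower
    omega
  unfold vsChi
  rw [hchi, Nat.add_sub_cancel]
  refine le_antisymm (Nat.sInf_le ⟨S, hScard, hSchrom⟩) <|
    le_csInf ⟨_, S, hScard, hSchrom⟩ fun k ⟨S', hS'card, hS'⟩ => hS'card ▸ ?_
  exact card_not_colorable_connectedComponent_le S' (chromNum_le_iff.1 hS'.le)

/-- If $G$ is a finite simple graph with at least one edge and
$χ(G) = Δ(G) + 1$, then $vs_χ(G)$ equals the number of connected components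
$C$ of $G$ with $χ(C) = Δ(G) + 1$. -/
theorem stmt_2 {V : Type*} [Fintype V] (G : SimpleGraph V)
    (hedge : G.edgeSet.Nonempty)
    (hchi : chromNum G = maxDeg G + 1) :
    vsChi G =
      Nat.card {c : G.ConnectedComponent //
        chromNum (G.induce c.supp) = maxDeg G + 1} :=
  stmt_2_general G hchi
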